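/- Let C and C' be two circuits of a loop-free matroid M on a linearly ordered ground set, each satisfying the property that its minimum element equals the minimum of cl(C) (resp. cl(C')) and that C \ min(C) (resp. C' \ min(C')) is inclusion-minimal among broken circuits with this property. If C' \ min(C') ⊆ C \ {c} for some c ∈ C with c ≠ min(C), then a contradiction follows; that is, no such containment can hold for distinct C, C' unless c = min(C). -/

import Mathlib

/-!
Since the circuit `C'` lies in the closure of `C' \ {m'}` and `C' \ {m'} ⊆ C`, the element `m'`
lies in `cl(C)`, so `m ≤ m'`. As `m'` is the least element of `C'`, this keeps `m` out of
`C' \ {m'}`, so `C' \ {m'} ⊆ C \ {m}`, and the minimality of the broken circuit of `C` forces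
equality. Then `c ∈ C \ {m} = C' \ {m'} ⊆ C \ {c}`, which is absurd.
-/

open Set

/-- A circuit of a matroid: a minimal dependent set. -/
def IsCircuit {α : Type*} (M : Matroid α) (C : Set α) : Prop :=
  M.Dep C ∧ ∀ D, D ⊂ C → ¬ M.Dep D

theorem isCircuit_iff_matroid_isCircuit {α : Type*} {M : Matroid α} {C : Set α} :
    IsCircuit M C ↔ M.IsCircuit C :=
  minimal_iff_forall_ssubset.symm

theorem sdiff_singleton_subset_sdiff_singleton_of_le {α : Type*} [LinearOrder α]
    {C C' : Set α} {m m' : α} (hsub : C' \ {m'} ⊆ C) (hmm' : m ≤ m')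
    (hm'min : ∀ y ∈ C', m' ≤ y) : C' \ {m'} ⊆ C \ {m} := by
  rintro x ⟨hxC', hxm'⟩
  refine ⟨hsub ⟨hxC', hxm'⟩, ?_⟩
  rintro rfl
  exact hxm' (le_antisymm hmm' (hm'min x hxC'))

theorem grobner_reduced_general {α : Type*} [LinearOrder α] (M : Matroid α)
    (C C' : Set α) (m m' : α)
    (hC' : IsCircuit M C')
    (hmcl : ∀ y ∈ M.closure C, m ≤ y)
    (hm'C : m' ∈ C') (hm'min : ∀ y ∈ C', m' ≤ y) (hm'cl : ∀ y ∈ M.closure C', m' ≤ y)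
    (hCminimal : ∀ D d, IsCircuit M D → d ∈ D → (∀ y ∈ D, d ≤ y) →
      (∀ y ∈ M.closure D, d ≤ y) → D \ {d} ⊆ C \ {m} → D \ {d} = C \ {m})
    (c : α) (hc : c ∈ C) (hsub : C' \ {m'} ⊆ C \ {c}) :
    c = m := by
  by_contra hcm
  have hsubC : C' \ {m'} ⊆ C := hsub.trans sdiff_subset
  have hm'clC : m' ∈ M.closure C := M.closure_subset_closure hsubC
    ((isCircuit_iff_matroid_isCircuit.mp hC').mem_closure_sdiff_singleton_of_mem hm'C)
  have hsubm : C' \ {m'} ⊆ C \ {m} :=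
    sdiff_singleton_subset_sdiff_singleton_of_le hsubC (hmcl m' hm'clC) hm'min
  have heq := hCminimal C' m' hC' hm'C hm'min hm'cl hsubm
  exact (hsub (heq ▸ ⟨hc, hcm⟩ : c ∈ C' \ {m'})).2 rfl

/-- Let `C` and `C'` be circuits of a loop-free matroid `M` on a linearly ordered
finite ground set, with minimum elements `m` and `m'` respectively, each satisfying:
its minimum equals the minimum of its closure, and its broken circuit is
inclusion-minimal among broken circuits of circuits with this property.  If
`C' \ {m'} ⊆ C \ {c}` for some `c ∈ C`, then `c = m`; that is, no such containment
can hold with `c ≠ min C`. -/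
theorem grobner_reduced {α : Type*} [LinearOrder α] (M : Matroid α)
    (hE : M.E.Finite) (hloopfree : ∀ x ∈ M.E, M.Indep {x})
    (C C' : Set α) (m m' : α)
    (hC : IsCircuit M C) (hC' : IsCircuit M C')
    (hmC : m ∈ C) (hmmin : ∀ y ∈ C, m ≤ y) (hmcl : ∀ y ∈ M.closure C, m ≤ y)
    (hm'C : m' ∈ C') (hm'min : ∀ y ∈ C', m' ≤ y) (hm'cl : ∀ y ∈ M.closure C', m' ≤ y)
    (hCminimal : ∀ D d, IsCircuit M D → d ∈ D → (∀ y ∈ D, d ≤ y) →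
      (∀ y ∈ M.closure D, d ≤ y) → D \ {d} ⊆ C \ {m} → D \ {d} = C \ {m})
    (hC'minimal : ∀ D d, IsCircuit M D → d ∈ D → (∀ y ∈ D, d ≤ y) →
      (∀ y ∈ M.closure D, d ≤ y) → D \ {d} ⊆ C' \ {m'} → D \ {d} = C' \ {m'})
    (c : α) (hc : c ∈ C) (hsub : C' \ {m'} ⊆ C \ {c}) :
    c = m :=
  grobner_reduced_general M C C' m m' hC' hmcl hm'C hm'min hm'cl hCminimal c hc hsub
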